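/- arXiv:1912.05251 — 2 statements merged into one kernel-verified Lean document; each statement's English description precedes it below -/
import Mathlib

section
/- Let F be a finite family of bottomless rectangles in general position such that no two rectangles of F form a tower or a nested pair. Then there exist a finite family F' of bottomless rectangles, each of width 1 (i.e. r − l = 1), and a bijection φ : F → F' such that for every subset S ⊆ F: there exists a point p ∈ ℝ² with S = {R ∈ F : R covers p} if and only if there exists a point p' ∈ ℝ² with φ(S) = {R' ∈ F' : R' covers p'} (i.e., the dual hypergraphs of F and F' are isomorphic). -/
/-- A bottomless rectangle with parameters `(l, r, t)`, `l ≤ r`. -/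
structure BRect where
  l : ℝ
  r : ℝ
  t : ℝ
  hlr : l ≤ r

/-- A point `(x, y)` is covered by `(l, r, t)` iff `l ≤ x ≤ r` and `y ≤ t`. -/
def BRect.covers (R : BRect) (p : ℝ × ℝ) : Prop :=
  R.l ≤ p.1 ∧ p.1 ≤ R.r ∧ p.2 ≤ R.t

/-- A finite family is in general position: pairwise distinct left, right and top
coordinates. -/
def GenPos (F : Finset BRect) : Prop :=
  ∀ R ∈ F, ∀ R' ∈ F, R ≠ R' → R.l ≠ R'.l ∧ R.r ≠ R'.r ∧ R.t ≠ R'.t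

/-- Two bottomless rectangles form a tower. -/
def TowerPair (A B : BRect) : Prop :=
  (A.l < B.l ∧ B.r < A.r ∧ A.t < B.t) ∨ (B.l < A.l ∧ A.r < B.r ∧ B.t < A.t)

/-- Two bottomless rectangles form a nested pair. -/
def NestedPair (A B : BRect) : Prop :=
  (A.l < B.l ∧ B.r < A.r ∧ B.t < A.t) ∨ (B.l < A.l ∧ A.r < B.r ∧ A.t < B.t)

/-!
Since no two rectangles form a tower or a nested pair, ordering the family by left
endpoints also orders it by right endpoints, so the projections to the `x`-axis form a
proper interval family. Which rectangles cover a point depends only on its height and on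
how its abscissa sits among the endpoints, so it suffices to find unit intervals
`[v R, v R + 1]` whose endpoints compare (for `≤`) exactly as the original ones do. These
are built greedily from left to right: each new `v R` must lie above all earlier values
and above `v R' + 1` for the earlier `R'` ending before `R` starts, and strictly below
`v R' + 1` for the others; keeping all these inequalities strict makes the constraints
compatible at every step.
-/

open Finset

theorem exists_between_finsets_mixed {α : Type*} [LinearOrder α] [DenselyOrdered α]
    [NoMinOrder α] [NoMaxOrder α] [Nonempty α] (A B C D : Finset α)
    (hAC : ∀ a ∈ A, ∀ c ∈ C, a < c) (hAD : ∀ a ∈ A, ∀ d ∈ D, a ≤ d)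
    (hBC : ∀ b ∈ B, ∀ c ∈ C, b < c) (hBD : ∀ b ∈ B, ∀ d ∈ D, b < d) :
    ∃ x, (∀ a ∈ A, a ≤ x) ∧ (∀ b ∈ B, b < x) ∧ (∀ c ∈ C, x < c) ∧ ∀ d ∈ D, x ≤ d := by
  obtain ⟨m, hBm, hm⟩ := Order.exists_between_finsets B (C ∪ D) fun b hb y hy => by
    rcases mem_union.1 hy with hy | hy
    exacts [hBC b hb y hy, hBD b hb y hy]
  have hne : (insert m A).Nonempty := insert_nonempty m A
  set x := (insert m A).max' hne
  have hmx : m ≤ x := le_max' _ m (mem_insert_self m A)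
  have hx : x = m ∨ x ∈ A := mem_insert.1 (max'_mem _ hne)
  refine ⟨x, fun a ha => le_max' _ a (mem_insert_of_mem ha),
    fun b hb => (hBm b hb).trans_le hmx, fun c hc => ?_, fun d hd => ?_⟩
  · rcases hx with hx | hx
    exacts [hx ▸ hm c (mem_union_left D hc), hAC x hx c hc]
  · rcases hx with hx | hx
    exacts [hx ▸ (hm d (mem_union_right C hd)).le, hAD x hx d hd]

section Intervals

variable {ι α β : Type*} [LinearOrder α] [LinearOrder β] {s : Finset ι} {u w : ι → α}
  {u' w' : ι → β}

def SameEndpointOrder (s : Finset ι) (u w : ι → α) (u' w' : ι → β) : Prop :=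
  ∀ i ∈ s, ∀ j ∈ s,
    (u i ≤ u j ↔ u' i ≤ u' j) ∧ (w i ≤ w j ↔ w' i ≤ w' j) ∧ (u i ≤ w j ↔ u' i ≤ w' j)

theorem SameEndpointOrder.symm (h : SameEndpointOrder s u w u' w') :
    SameEndpointOrder s u' w' u w := fun i hi j hj =>
  let ⟨huu, hww, huw⟩ := h i hi j hj
  ⟨huu.symm, hww.symm, huw.symm⟩

theorem SameEndpointOrder.exists_le_iff_and_le_iff [DenselyOrdered β] [NoMinOrder β]
    [NoMaxOrder β] [Nonempty β] (h : SameEndpointOrder s u w u' w') (x : α) :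
    ∃ x', ∀ i ∈ s, (u i ≤ x ↔ u' i ≤ x') ∧ (x ≤ w i ↔ x' ≤ w' i) := by
  classical
  obtain ⟨x', hA, hB, hC, hD⟩ := exists_between_finsets_mixed
    ((s.filter (u · ≤ x)).image u') ((s.filter (w · < x)).image w')
    ((s.filter (x < u ·)).image u') ((s.filter (x ≤ w ·)).image w')
    (by
      simp only [forall_mem_image, mem_filter]
      exact fun i ⟨hi, hix⟩ j ⟨hj, hxj⟩ =>
        not_le.1 fun hji => (hxj.trans_le ((h j hj i hi).1.2 hji)).not_ge hix)
    (by
      simp only [forall_mem_image, mem_filter]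
      exact fun i ⟨hi, hix⟩ j ⟨hj, hxj⟩ => (h i hi j hj).2.2.1 (hix.trans hxj))
    (by
      simp only [forall_mem_image, mem_filter]
      exact fun i ⟨hi, hix⟩ j ⟨hj, hxj⟩ =>
        not_le.1 fun hji => (hix.trans hxj).not_ge ((h j hj i hi).2.2.2 hji))
    (by
      simp only [forall_mem_image, mem_filter]
      exact fun i ⟨hi, hix⟩ j ⟨hj, hxj⟩ =>
        not_le.1 fun hji => (hix.trans_le hxj).not_ge ((h j hj i hi).2.1.2 hji))
  refine ⟨x', fun i hi => ⟨⟨fun hix => ?_, fun hix => ?_⟩, ⟨fun hxi => ?_, fun hxi => ?_⟩⟩⟩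
  · exact hA _ (mem_image_of_mem u' (mem_filter.2 ⟨hi, hix⟩))
  · by_contra hxi
    exact (hC _ (mem_image_of_mem u' (mem_filter.2 ⟨hi, not_le.1 hxi⟩))).not_ge hix
  · exact hD _ (mem_image_of_mem w' (mem_filter.2 ⟨hi, hxi⟩))
  · by_contra hix
    exact (hB _ (mem_image_of_mem w' (mem_filter.2 ⟨hi, not_le.1 hix⟩))).not_ge hxi

/-- The unit intervals `[v i, v i + 1]` model the intervals `[u i, w i]`, with every
comparison between a left and a right endpoint made strict. -/
def IsStrictUnitModel (s : Finset ι) (u w : ι → α) (v : ι → ℝ) : Prop :=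
  ∀ i ∈ s, ∀ j ∈ s,
    (u i ≤ u j ↔ v i ≤ v j) ∧ (u i ≤ w j → v i < v j + 1) ∧ (w j < u i → v j + 1 < v i)

theorem IsStrictUnitModel.sameEndpointOrder {v : ι → ℝ} (h : IsStrictUnitModel s u w v)
    (hproper : ∀ i ∈ s, ∀ j ∈ s, u i ≤ u j ↔ w i ≤ w j) :
    SameEndpointOrder s u w v (v · + 1) := fun i hi j hj => by
  obtain ⟨huu, hlt, hgt⟩ := h i hi j hj
  refine ⟨huu, by rw [← hproper i hi j hj, huu, add_le_add_iff_right],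
    fun hle => (hlt hle).le, fun hle => ?_⟩
  by_contra hwu
  exact (hgt (not_le.1 hwu)).not_ge hle

theorem IsStrictUnitModel.exists_next {v : ι → ℝ} (h : IsStrictUnitModel s u w v) {a : ι}
    (hproper : ∀ i ∈ s, ∀ j ∈ s, u i ≤ u j ↔ w i ≤ w j) (hlt : ∀ i ∈ s, u i < u a) :
    ∃ y, (∀ i ∈ s, v i < y) ∧
      ∀ i ∈ s, (u a ≤ w i → y < v i + 1) ∧ (w i < u a → v i + 1 < y) := by
  classical
  obtain ⟨y, hlo, hhi⟩ := Order.exists_between_finsets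
    (s.image v ∪ (s.filter (w · < u a)).image (v · + 1)) ((s.filter (u a ≤ w ·)).image (v · + 1))
    (by
      simp only [forall_mem_union, forall_mem_image, mem_filter]
      refine ⟨fun i hi j ⟨hj, hwj⟩ => (h i hi j hj).2.1 ((hlt i hi).le.trans hwj),
        fun i ⟨hi, hwi⟩ j ⟨hj, hwj⟩ => ?_⟩
      have hvij : ¬ v j ≤ v i := by
        rw [← (h j hj i hi).1, hproper j hj i hi]
        exact (hwi.trans_le hwj).not_ge
      linarith [not_le.1 hvij])
  simp only [forall_mem_union, forall_mem_image, mem_filter] at hlo hhi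
  exact ⟨y, hlo.1, fun i hi => ⟨fun hwi => hhi ⟨hi, hwi⟩, fun hwi => hlo.2 ⟨hi, hwi⟩⟩⟩

theorem IsStrictUnitModel.insert [DecidableEq ι] {v : ι → ℝ} (h : IsStrictUnitModel s u w v)
    {a : ι} (ha : a ∉ s) (hlt : ∀ i ∈ s, u i < u a) (hua : u a ≤ w a) {y : ℝ}
    (hvy : ∀ i ∈ s, v i < y)
    (hsep : ∀ i ∈ s, (u a ≤ w i → y < v i + 1) ∧ (w i < u a → v i + 1 < y)) :
    IsStrictUnitModel (insert a s) u w (Function.update v a y) := by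
  have hv : ∀ i ∈ s, Function.update v a y i = v i := fun i hi =>
    Function.update_of_ne (ne_of_mem_of_not_mem hi ha) y v
  simp only [IsStrictUnitModel, forall_mem_insert, Function.update_self]
  refine ⟨⟨⟨iff_of_true le_rfl le_rfl, fun _ => lt_add_one y, fun hwu => absurd hua hwu.not_ge⟩,
    fun j hj => ?_⟩, fun i hi => ⟨?_, fun j hj => ?_⟩⟩
  · rw [hv j hj]
    exact ⟨iff_of_false (hlt j hj).not_ge (hvy j hj).not_ge, (hsep j hj).1, (hsep j hj).2⟩
  · rw [hv i hi]
    exact ⟨iff_of_true (hlt i hi).le (hvy i hi).le, fun _ => by linarith [hvy i hi],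
      fun hwu => absurd ((hlt i hi).trans_le hua) hwu.not_gt⟩
  · simpa only [hv i hi, hv j hj] using h i hi j hj

theorem exists_isStrictUnitModel (s : Finset ι) (hu : Set.InjOn u s)
    (huw : ∀ i ∈ s, u i ≤ w i) (hproper : ∀ i ∈ s, ∀ j ∈ s, u i ≤ u j ↔ w i ≤ w j) :
    ∃ v, IsStrictUnitModel s u w v := by
  classical
  induction s using Finset.induction_on_max_value u with
  | empty => exact ⟨0, by simp [IsStrictUnitModel]⟩
  | insert a s ha hmax ih =>
    have hsub : (s : Set ι) ⊆ ↑(insert a s) := by simp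
    obtain ⟨v, hv⟩ := ih (hu.mono hsub) (fun i hi => huw i (mem_insert_of_mem hi))
      fun i hi j hj => hproper i (mem_insert_of_mem hi) j (mem_insert_of_mem hj)
    have hlt : ∀ i ∈ s, u i < u a := fun i hi => (hmax i hi).lt_of_ne fun hia =>
      ne_of_mem_of_not_mem hi ha (hu (hsub hi) (by simp) hia)
    obtain ⟨y, hvy, hsep⟩ := hv.exists_next
      (fun i hi j hj => hproper i (mem_insert_of_mem hi) j (mem_insert_of_mem hj)) hlt
    exact ⟨_, hv.insert ha hlt (huw a (mem_insert_self a s)) hvy hsep⟩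

end Intervals

theorem exists_covers_iff_of_sameEndpointOrder {ι : Type*} {s : Finset ι} {f g : ι → BRect}
    (hx : SameEndpointOrder s (fun i => (f i).l) (fun i => (f i).r)
      (fun i => (g i).l) (fun i => (g i).r))
    (ht : ∀ i ∈ s, (g i).t = (f i).t) (p : ℝ × ℝ) :
    ∃ p', ∀ i ∈ s, ((g i).covers p' ↔ (f i).covers p) := by
  obtain ⟨x', hx'⟩ := hx.exists_le_iff_and_le_iff p.1
  refine ⟨(x', p.2), fun i hi => ?_⟩
  simp only [BRect.covers, (hx' i hi).1, (hx' i hi).2, ht i hi]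

theorem GenPos.injOn_l {F : Finset BRect} (hF : GenPos F) : Set.InjOn BRect.l F :=
  fun R hR R' hR' hl => by_contra fun hne => (hF R hR R' hR' hne).1 hl

theorem GenPos.l_le_iff_r_le {F : Finset BRect} (hF : GenPos F)
    (hfree : ∀ R ∈ F, ∀ R' ∈ F, ¬ TowerPair R R' ∧ ¬ NestedPair R R') :
    ∀ R ∈ F, ∀ R' ∈ F, R.l ≤ R'.l ↔ R.r ≤ R'.r := by
  intro R hR R' hR'
  rcases eq_or_ne R R' with rfl | hne
  · simp
  have := hF R hR R' hR' hne
  have := hfree R hR R' hR'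
  grind [TowerPair, NestedPair]

/-- Every tower- and nested-pair-free family of bottomless rectangles can be realised
as a family of unit-width bottomless rectangles with an isomorphic dual hypergraph. -/
theorem steps_eq_unit_bottomless (F : Finset BRect) (hF : GenPos F)
    (hfree : ∀ R ∈ F, ∀ R' ∈ F, ¬ TowerPair R R' ∧ ¬ NestedPair R R') :
    ∃ (F' : Finset BRect) (φ : BRect → BRect),
      (∀ R' ∈ F', R'.r - R'.l = 1) ∧
      Set.BijOn φ ↑F ↑F' ∧
      ∀ S : Finset BRect, S ⊆ F →
        ((∃ p : ℝ × ℝ, ∀ R ∈ F, (R.covers p ↔ R ∈ S)) ↔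
          (∃ p' : ℝ × ℝ, ∀ R ∈ F, ((φ R).covers p' ↔ R ∈ S))) := by
  classical
  have hproper := hF.l_le_iff_r_le hfree
  obtain ⟨v, hv⟩ := exists_isStrictUnitModel F hF.injOn_l (fun R _ => R.hlr) hproper
  let φ : BRect → BRect := fun R => ⟨v R, v R + 1, R.t, by linarith⟩
  have hφ : SameEndpointOrder F (fun R => (id R).l) (fun R => (id R).r)
      (fun R => (φ R).l) (fun R => (φ R).r) := hv.sameEndpointOrder hproper
  have hinj : Set.InjOn φ F := fun R hR R' hR' hRR' =>
    hF.injOn_l hR hR' (le_antisymm ((hv R hR R' hR').1.2 (congrArg BRect.l hRR').le)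
      ((hv R' hR' R hR).1.2 (congrArg BRect.l hRR').ge))
  refine ⟨F.image φ, φ, by simp [φ], by simpa using hinj.bijOn_image, fun S _ => ⟨?_, ?_⟩⟩
  · rintro ⟨p, hp⟩
    obtain ⟨p', hp'⟩ := exists_covers_iff_of_sameEndpointOrder hφ (fun _ _ => rfl) p
    exact ⟨p', fun R hR => (hp' R hR).trans (hp R hR)⟩
  · rintro ⟨p', hp'⟩
    obtain ⟨p, hp⟩ := exists_covers_iff_of_sameEndpointOrder hφ.symm (fun _ _ => rfl) p'
    exact ⟨p, fun R hR => (hp R hR).trans (hp' R hR)⟩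
end

section
/- Let k ≥ 1 and let F be a finite family of bottomless rectangles in general position such that no two rectangles of F form a tower. Then there exists a colouring c : F → {1, …, k} such that every point covered by at least 2k − 1 rectangles of F is covered by all k colours. -/
/-- The colouring `c` is polychromatic with threshold `N`: every point covered by at
least `N` rectangles of `F` is covered by all `k` colours. -/
def Polychromatic (k N : ℕ) (F : Finset BRect) (c : BRect → Fin k) : Prop :=
  ∀ p : ℝ × ℝ,
    (∃ G ⊆ F, N ≤ G.card ∧ ∀ R ∈ G, R.covers p) →
    ∀ i : Fin k, ∃ R ∈ F, R.covers p ∧ c R = i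

open Finset

section

variable {α β : Type*} [LinearOrder β]

theorem exists_greedy_subset [DecidableEq α] (f : α → β) (P : α → Finset α → Prop)
    (s : Finset α) : ∃ S ⊆ s, ∀ a ∈ s, a ∈ S ↔ P a {b ∈ S | f b < f a} := by
  induction s using Finset.induction_on_max_value f with
  | empty => exact ⟨∅, subset_rfl, by simp⟩
  | insert a s ha hmax ih =>
    obtain ⟨S, hSs, hS⟩ := ih
    classical
    set S' := {b ∈ insert a S | b = a → P a {b ∈ S | f b < f a}}
    have hlow : ∀ y, f y ≤ f a → {b ∈ S' | f b < f y} = {b ∈ S | f b < f y} := by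
      intro y hy
      ext b
      simp only [S', mem_filter, mem_insert]
      constructor
      · rintro ⟨⟨rfl | hb, -⟩, hby⟩
        · exact absurd hy (not_le.2 hby)
        · exact ⟨hb, hby⟩
      · rintro ⟨hb, hby⟩
        exact ⟨⟨Or.inr hb, fun hba => absurd (hba ▸ hSs hb) ha⟩, hby⟩
    refine ⟨S', fun b hb => ?_, fun x hx => ?_⟩
    · simp only [S', mem_filter, mem_insert] at hb ⊢
      exact hb.1.imp_right (@hSs b)
    · rw [hlow x (by rcases mem_insert.1 hx with rfl | hx <;> [rfl; exact hmax x hx])]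
      simp only [S', mem_filter, mem_insert]
      rcases mem_insert.1 hx with rfl | hx
      · exact ⟨fun h => h.2 rfl, fun h => ⟨Or.inl rfl, fun _ => h⟩⟩
      · have hxa : x ≠ a := fun h => ha (h ▸ hx)
        simp only [hxa, false_or, IsEmpty.forall_iff, and_true]
        exact hS x hx

def topBy (f : α → β) (m : ℕ) (s : Finset α) : Finset α :=
  {a ∈ s | #{b ∈ s | f a < f b} < m}

variable {f : α → β} {m : ℕ} {s : Finset α} {a b : α}

theorem topBy_subset : topBy f m s ⊆ s := filter_subset _ _

theorem card_filter_lt_lt_of_mem_topBy (ha : a ∈ topBy f m s) : #{b ∈ s | f a < f b} < m :=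
  (mem_filter.1 ha).2

theorem mem_topBy_of_le (ha : a ∈ topBy f m s) (hb : b ∈ s) (hab : f a ≤ f b) :
    b ∈ topBy f m s :=
  mem_filter.2 ⟨hb, (card_le_card (monotone_filter_right s fun _ _ => hab.trans_lt)).trans_lt
    (card_filter_lt_lt_of_mem_topBy ha)⟩

theorem lt_of_mem_topBy_of_notMem (ha : a ∈ topBy f m s) (hb : b ∈ s) (hb' : b ∉ topBy f m s) :
    f b < f a :=
  not_le.1 fun hab => hb' (mem_topBy_of_le ha hb hab)

theorem mem_topBy_of_forall_le (hm : 0 < m) (ha : a ∈ s) (hmax : ∀ b ∈ s, f b ≤ f a) :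
    a ∈ topBy f m s := by
  refine mem_filter.2 ⟨ha, ?_⟩
  rwa [filter_false_of_mem fun b hb => not_lt.2 (hmax b hb), card_empty]

theorem card_topBy (hf : Set.InjOn f s) (hm : m ≤ #s) : #(topBy f m s) = m := by
  classical
  set rank : α → ℕ := fun a => #{b ∈ s | f a < f b}
  have rank_lt : ∀ a ∈ s, ∀ b ∈ s, f a < f b → rank b < rank a := fun a ha b hb hab =>
    card_lt_card <| (ssubset_iff_of_subset (monotone_filter_right s fun _ _ => hab.trans)).2
      ⟨b, mem_filter.2 ⟨hb, hab⟩, fun h => (mem_filter.1 h).2.false⟩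
  have hinj : Set.InjOn rank s := fun a ha b hb hab => by
    by_contra hne
    rcases (hf.ne ha hb hne).lt_or_gt with h | h
    · exact (rank_lt a ha b hb h).ne' hab
    · exact (rank_lt b hb a ha h).ne hab
  have himage : s.image rank = range #s := by
    refine eq_of_subset_of_card_le (fun n hn => ?_) (by rw [card_range, card_image_of_injOn hinj])
    obtain ⟨a, ha, rfl⟩ := mem_image.1 hn
    exact mem_range.2 <| card_lt_card <| (ssubset_iff_of_subset (filter_subset _ s)).2
      ⟨a, ha, fun h => (mem_filter.1 h).2.false⟩
  have himage_top : (topBy f m s).image rank = range m := by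
    rw [topBy, ← filter_image (p := (· < m)), himage]
    ext n; simp only [mem_filter, mem_range]; omega
  rw [← card_image_of_injOn (hinj.mono topBy_subset), himage_top, card_range]

end

theorem mem_or_mem_of_mem_uIcc {a b c l r l' r' : ℝ} (ha : a ∈ Set.Icc l r)
    (hb : b ∈ Set.Icc l r) (hc : c ∈ Set.uIcc a b) (hc' : c ∈ Set.Icc l' r')
    (hout : l' < l ∨ r < r') : a ∈ Set.Icc l' r' ∨ b ∈ Set.Icc l' r' := by
  simp only [Set.mem_Icc, Set.mem_uIcc] at *
  grind

theorem mem_uIcc_or_mem_uIcc_of_le_iff_le {x p q : ℝ} (h : x ≤ p ↔ x ≤ q) :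
    p ∈ Set.uIcc x q ∨ q ∈ Set.uIcc x p := by
  simp only [Set.mem_uIcc]
  grind

theorem GenPos.injOn_t {F : Finset BRect} (hF : GenPos F) : Set.InjOn BRect.t F :=
  fun R hR R' hR' h => by_contra fun hne => (hF R hR R' hR' hne).2.2 h

theorem GenPos.mono {F F' : Finset BRect} (hF : GenPos F) (h : F' ⊆ F) : GenPos F' :=
  fun R hR R' hR' => hF R (h hR) R' (h hR')

theorem l_lt_or_r_lt_of_t_lt {F : Finset BRect} (hF : GenPos F)
    (hfree : ∀ R ∈ F, ∀ R' ∈ F, ¬ TowerPair R R') {P H : BRect} (hP : P ∈ F) (hH : H ∈ F)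
    (ht : P.t < H.t) : H.l < P.l ∨ P.r < H.r := by
  obtain ⟨hl, hr, -⟩ := hF P hP H hH (fun h => ht.ne (congrArg BRect.t h))
  by_contra! h
  exact hfree P hP H hH (Or.inl ⟨lt_of_le_of_ne h.1 hl, lt_of_le_of_ne h.2 hr.symm, ht⟩)

noncomputable section

open Classical

def stabbed (F : Finset BRect) (x : ℝ) : Finset BRect :=
  {R ∈ F | x ∈ Set.Icc R.l R.r}

theorem stabbed_subset {F : Finset BRect} {x : ℝ} : stabbed F x ⊆ F := filter_subset _ _

theorem mem_stabbed {F : Finset BRect} {x : ℝ} {R : BRect} :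
    R ∈ stabbed F x ↔ R ∈ F ∧ x ∈ Set.Icc R.l R.r := mem_filter

theorem le_card_stabbed {F G : Finset BRect} {p : ℝ × ℝ} (hGF : G ⊆ F)
    (hGp : ∀ R ∈ G, R.covers p) : #G ≤ #(stabbed F p.1) :=
  card_le_card fun R hR => mem_stabbed.2 ⟨hGF hR, (hGp R hR).1, (hGp R hR).2.1⟩

theorem covers_of_mem_topBy {F G : Finset BRect} {m : ℕ} {p : ℝ × ℝ} (hGF : G ⊆ F)
    (hG : m ≤ #G) (hGp : ∀ R ∈ G, R.covers p) {R : BRect}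
    (hR : R ∈ topBy BRect.t m (stabbed F p.1)) : R.covers p := by
  obtain ⟨-, hRl, hRr⟩ := mem_stabbed.1 (topBy_subset hR)
  refine ⟨hRl, hRr, not_lt.1 fun hRp => ?_⟩
  have hsub : G ⊆ {H ∈ stabbed F p.1 | R.t < H.t} := fun H hH =>
    mem_filter.2 ⟨mem_stabbed.2 ⟨hGF hH, (hGp H hH).1, (hGp H hH).2.1⟩,
      hRp.trans_le (hGp H hH).2.2⟩
  exact (hG.trans (card_le_card hsub)).not_gt (card_filter_lt_lt_of_mem_topBy hR)

def IsSelectableAt (F : Finset BRect) (m : ℕ) (T : Finset BRect) (R : BRect) (x : ℝ) : Prop :=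
  m ≤ #(stabbed F x) ∧ R ∈ stabbed F x ∧ (∀ H ∈ stabbed F x, H.t ≤ R.t) ∧
    Disjoint (topBy BRect.t m (stabbed F x)) T

/-- The outcome of going through `F` from bottom to top and selecting `R` whenever it is
selectable given the rectangles selected before it. -/
def IsGreedyHitting (F : Finset BRect) (m : ℕ) (S : Finset BRect) : Prop :=
  S ⊆ F ∧ ∀ R ∈ F, R ∈ S ↔ ∃ x, IsSelectableAt F m {P ∈ S | P.t < R.t} R x

theorem exists_isGreedyHitting (F : Finset BRect) (m : ℕ) : ∃ S, IsGreedyHitting F m S :=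
  exists_greedy_subset BRect.t (fun R T => ∃ x, IsSelectableAt F m T R x) F

theorem not_isSelectableAt_of_sameSide {F T : Finset BRect} (hF : GenPos F)
    (hfree : ∀ R ∈ F, ∀ R' ∈ F, ¬ TowerPair R R') {m : ℕ} {x p q : ℝ} {P Q : BRect}
    (hPQ : P.t < Q.t) (hPx : P ∈ topBy BRect.t m (stabbed F x)) (hQx : Q ∈ stabbed F x)
    (hPp : P ∈ stabbed F p) (hPmax : ∀ H ∈ stabbed F p, H.t ≤ P.t) (hPT : P ∈ T)
    (hside : p ∈ Set.uIcc x q ∨ q ∈ Set.uIcc x p) : ¬ IsSelectableAt F m T Q q := by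
  rintro ⟨hq, hQq, -, hdisj⟩
  obtain ⟨hPF, hxP⟩ := mem_stabbed.1 (topBy_subset hPx)
  rcases hside with hp | hq'
  · have hQp : Q ∈ stabbed F p := mem_stabbed.2 ⟨stabbed_subset hQq,
      Set.uIcc_subset_Icc (mem_stabbed.1 hQx).2 (mem_stabbed.1 hQq).2 hp⟩
    exact (hPmax Q hQp).not_gt hPQ
  · have hPq : P ∈ stabbed F q := mem_stabbed.2 ⟨hPF,
      Set.uIcc_subset_Icc hxP (mem_stabbed.1 hPp).2 hq'⟩
    have hPq' : P ∉ topBy BRect.t m (stabbed F q) := disjoint_right.1 hdisj hPT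
    have hsub : topBy BRect.t m (stabbed F q) ⊆ {H ∈ stabbed F x | P.t < H.t} := by
      intro H hH
      have hPH : P.t < H.t := lt_of_mem_topBy_of_notMem hH hPq hPq'
      obtain ⟨hHF, hqH⟩ := mem_stabbed.1 (topBy_subset hH)
      refine mem_filter.2 ⟨mem_stabbed.2 ⟨hHF, ?_⟩, hPH⟩
      refine (mem_or_mem_of_mem_uIcc hxP (mem_stabbed.1 hPp).2 hq' hqH
        (l_lt_or_r_lt_of_t_lt hF hfree hPF hHF hPH)).resolve_right fun hpH => ?_
      exact (hPmax H (mem_stabbed.2 ⟨hHF, hpH⟩)).not_gt hPH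
    have hcard : #(topBy BRect.t m (stabbed F q)) = m :=
      card_topBy (hF.injOn_t.mono stabbed_subset) hq
    have hlt := card_filter_lt_lt_of_mem_topBy hPx
    have hle := card_le_card hsub
    omega

namespace IsGreedyHitting

variable {F S : Finset BRect} {m : ℕ}

theorem inter_nonempty (hS : IsGreedyHitting F m S) (hm : 0 < m) {x : ℝ}
    (hx : m ≤ #(stabbed F x)) : (topBy BRect.t m (stabbed F x) ∩ S).Nonempty := by
  obtain ⟨R, hR, hRmax⟩ := exists_max_image (stabbed F x) BRect.t (card_pos.1 (hm.trans_le hx))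
  have hRtop : R ∈ topBy BRect.t m (stabbed F x) := mem_topBy_of_forall_le hm hR hRmax
  by_cases hlow : Disjoint (topBy BRect.t m (stabbed F x)) {P ∈ S | P.t < R.t}
  · exact ⟨R, mem_inter.2 ⟨hRtop, (hS.2 R (stabbed_subset hR)).2 ⟨x, hx, hR, hRmax, hlow⟩⟩⟩
  · obtain ⟨P, hP, hPS⟩ := not_disjoint_iff.1 hlow
    exact ⟨P, mem_inter.2 ⟨hP, (mem_filter.1 hPS).1⟩⟩

theorem eq_of_le_iff_le (hS : IsGreedyHitting F m S) (hF : GenPos F)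
    (hfree : ∀ R ∈ F, ∀ R' ∈ F, ¬ TowerPair R R') {x p q : ℝ} {P Q : BRect}
    (hP : P ∈ topBy BRect.t m (stabbed F x) ∩ S) (hQ : Q ∈ topBy BRect.t m (stabbed F x) ∩ S)
    (hp : IsSelectableAt F m {O ∈ S | O.t < P.t} P p)
    (hq : IsSelectableAt F m {O ∈ S | O.t < Q.t} Q q) (hside : x ≤ p ↔ x ≤ q) : P = Q := by
  obtain ⟨hPx, hPS⟩ := mem_inter.1 hP
  obtain ⟨hQx, hQS⟩ := mem_inter.1 hQ
  have hside' := mem_uIcc_or_mem_uIcc_of_le_iff_le hside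
  rcases lt_trichotomy P.t Q.t with hPQ | hPQ | hPQ
  · exact (not_isSelectableAt_of_sameSide hF hfree hPQ hPx (topBy_subset hQx) hp.2.1 hp.2.2.1
      (mem_filter.2 ⟨hPS, hPQ⟩) hside' hq).elim
  · exact hF.injOn_t (hS.1 hPS) (hS.1 hQS) hPQ
  · exact (not_isSelectableAt_of_sameSide hF hfree hPQ hQx (topBy_subset hPx) hq.2.1 hq.2.2.1
      (mem_filter.2 ⟨hQS, hPQ⟩) hside'.symm hp).elim

theorem card_inter_le_two (hS : IsGreedyHitting F m S) (hF : GenPos F)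
    (hfree : ∀ R ∈ F, ∀ R' ∈ F, ¬ TowerPair R R') (x : ℝ) :
    #(topBy BRect.t m (stabbed F x) ∩ S) ≤ 2 := by
  have hwit : ∀ R ∈ topBy BRect.t m (stabbed F x) ∩ S,
      ∃ p, IsSelectableAt F m {O ∈ S | O.t < R.t} R p := fun R hR =>
    (hS.2 R (hS.1 (mem_inter.1 hR).2)).1 (mem_inter.1 hR).2
  choose! w hw using hwit
  -- the side of `x` on which a rectangle was selected determines it
  calc #(topBy BRect.t m (stabbed F x) ∩ S)
      ≤ #(univ : Finset Bool) := card_le_card_of_injOn (fun R => decide (x ≤ w R))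
          (fun _ _ => mem_coe.2 (mem_univ _)) fun P hP Q hQ h =>
            hS.eq_of_le_iff_le hF hfree hP hQ (hw P hP) (hw Q hQ) (by simpa using h)
    _ = 2 := rfl

end IsGreedyHitting

theorem polychromatic_one (F : Finset BRect) (c : BRect → Fin 1) : Polychromatic 1 1 F c := by
  rintro p ⟨G, hGF, hG, hGp⟩ i
  obtain ⟨R, hR⟩ := card_pos.1 hG
  exact ⟨R, hGF hR, hGp R hR, Subsingleton.elim _ _⟩

theorem Polychromatic.extend {k m : ℕ} {F S : Finset BRect} (hF : GenPos F)
    (hhit : ∀ x, m + 2 ≤ #(stabbed F x) → (topBy BRect.t (m + 2) (stabbed F x) ∩ S).Nonempty)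
    (hply : ∀ x, #(topBy BRect.t (m + 2) (stabbed F x) ∩ S) ≤ 2) {c : BRect → Fin k}
    (hc : Polychromatic k m (F \ S) c) :
    Polychromatic (k + 1) (m + 2) F fun R => if R ∈ S then Fin.last k else (c R).castSucc := by
  rintro p ⟨G, hGF, hG, hGp⟩ i
  have hdeep := hG.trans (le_card_stabbed hGF hGp)
  set E := topBy BRect.t (m + 2) (stabbed F p.1)
  have hEF : E ⊆ F := topBy_subset.trans stabbed_subset
  have hEp : ∀ R ∈ E, R.covers p := fun R => covers_of_mem_topBy hGF hG hGp
  cases i using Fin.lastCases with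
  | last =>
    obtain ⟨R, hR⟩ := hhit p.1 hdeep
    obtain ⟨hRE, hRS⟩ := mem_inter.1 hR
    exact ⟨R, hEF hRE, hEp R hRE, if_pos hRS⟩
  | cast j =>
    have hcard : m ≤ #(E \ S) := by
      have hE : #E = m + 2 := card_topBy (hF.injOn_t.mono stabbed_subset) hdeep
      have hES : #(E ∩ S) ≤ 2 := hply p.1
      have := card_sdiff_add_card_inter E S
      omega
    obtain ⟨R, hR, hRp, hRc⟩ := hc p ⟨E \ S, sdiff_subset_sdiff hEF subset_rfl, hcard,
      fun R hR => hEp R (mem_sdiff.1 hR).1⟩ j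
    obtain ⟨hRF, hRS⟩ := mem_sdiff.1 hR
    exact ⟨R, hRF, hRp, by simp only [if_neg hRS, hRc]⟩

end

/-- For tower-free families, `m_k^* ≤ 2k - 1`. -/
theorem towerfree_mk_le (k : ℕ) (hk : 1 ≤ k) (F : Finset BRect) (hF : GenPos F)
    (hfree : ∀ R ∈ F, ∀ R' ∈ F, ¬ TowerPair R R') :
    ∃ c : BRect → Fin k, Polychromatic k (2 * k - 1) F c := by
  classical
  induction k, hk using Nat.le_induction generalizing F with
  | base => exact ⟨fun _ => 0, polychromatic_one F _⟩
  | succ k hk ih =>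
    obtain ⟨S, hS⟩ := exists_isGreedyHitting F (2 * k - 1 + 2)
    obtain ⟨c, hc⟩ := ih (F \ S) (hF.mono sdiff_subset)
      fun R hR R' hR' => hfree R (sdiff_subset hR) R' (sdiff_subset hR')
    rw [show 2 * (k + 1) - 1 = 2 * k - 1 + 2 by omega]
    exact ⟨_, hc.extend hF (fun _ => hS.inter_nonempty (by omega))
      (hS.card_inter_le_two hF hfree)⟩
end
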